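/- arXiv:2001.10772 — 4 statements merged into one kernel-verified Lean document; each statement's English description precedes it below -/
import Mathlib

section
/- Let n be divisible by k, m = n/k, and let D be the circulant digraph on Z/nZ with edges i → i+j for j ∈ {1,...,k}. If S ⊆ Z/nZ has exactly m vertices and the induced subgraph on S has minimum out-degree at least 1, then no two distinct vertices of S differ by less than k; equivalently, S = {i, i+k, i+2k, ..., i+(m-1)k} for some i. -/
/-- In the circulant digraph on `ZMod n` with edges `i → i + j` for `j ∈ {1,…,k}`
(`k ∣ n`, `m = n / k`): if `S` has exactly `m` vertices and the induced subgraph on `S`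
has minimum out-degree at least 1, then no two distinct vertices of `S` differ by less
than `k`; equivalently, `S = {i, i+k, i+2k, …, i+(m-1)k}` for some `i`. -/
theorem stmt_2 (n k : ℕ) [NeZero n] (hk : 0 < k) (hkn : k < n) (hdvd : k ∣ n)
    (S : Finset (ZMod n)) (hcard : S.card = n / k)
    (hdeg : ∀ v ∈ S, ∃ j : ℕ, 1 ≤ j ∧ j ≤ k ∧ v + (j : ZMod n) ∈ S) :
    (∀ a ∈ S, ∀ b ∈ S, ∀ j : ℕ, 0 < j → j < k → b ≠ a + (j : ZMod n)) ∧
    (∃ i : ZMod n,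
      S = Finset.image (fun t : Fin (n / k) => i + ((t.val * k : ℕ) : ZMod n))
        Finset.univ) := by
  set m := n / k with hm
  have hn : m * k = n := Nat.div_mul_cancel hdvd
  have hm0 : 0 < m := Nat.div_pos hkn.le hk
  -- choose a successor-step function
  set F : ZMod n → ℕ := fun v => if h : v ∈ S then (hdeg v h).choose else 0 with hFdef
  have hF : ∀ v ∈ S, 1 ≤ F v ∧ F v ≤ k ∧ v + (F v : ZMod n) ∈ S := by
    intro v hv
    simp only [hFdef, dif_pos hv]
    exact (hdeg v hv).choose_spec
  -- a starting vertex
  have hScard : S.card = m := hcard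
  obtain ⟨s0, hs0⟩ := Finset.card_pos.mp (hScard ▸ hm0)
  -- the successor chain
  set w : ℕ → ZMod n := fun t => Nat.rec s0 (fun _ x => x + (F x : ZMod n)) t with hwdef
  have hwsucc : ∀ t, w (t + 1) = w t + (F (w t) : ZMod n) := fun t => rfl
  have hwS : ∀ t, w t ∈ S := by
    intro t
    induction t with
    | zero => exact hs0
    | succ t ih => rw [hwsucc]; exact (hF _ ih).2.2
  -- cumulative sums
  set A : ℕ → ℕ := fun t => ∑ s ∈ Finset.range t, F (w s) with hAdef
  have hwA : ∀ t, w t = s0 + ((A t : ℕ) : ZMod n) := by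
    intro t
    induction t with
    | zero => simp [hAdef, hwdef]
    | succ t ih =>
      rw [hwsucc, show A (t + 1) = A t + F (w t) from by
        simp [hAdef, Finset.sum_range_succ]]
      rw [Nat.cast_add, ← add_assoc, ← ih]
  -- pigeonhole: a repeat among w 0, …, w m
  obtain ⟨a, -, b, -, hab, heq⟩ :=
    Finset.exists_ne_map_eq_of_card_lt_of_maps_to
      (s := (Finset.univ : Finset (Fin (m + 1)))) (t := S)
      (by simp [hScard]) (fun t _ => hwS t.val)
  -- wlog a < b (as naturals)
  obtain ⟨p, q, hpq, hqle, hweq⟩ : ∃ p q : ℕ, p < q ∧ q ≤ m ∧ w p = w q := by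
    rcases hab.lt_or_gt with h | h
    · exact ⟨a.val, b.val, h, Nat.lt_succ_iff.mp b.isLt, heq⟩
    · exact ⟨b.val, a.val, h, Nat.lt_succ_iff.mp a.isLt, heq.symm⟩
  -- the sum of steps over the cycle
  set d : ℕ := ∑ s ∈ Finset.Ico p q, F (w s) with hddef
  have hAd : A p + d = A q := by
    simp only [hAdef, hddef, Finset.range_eq_Ico]
    exact Finset.sum_Ico_consecutive _ (Nat.zero_le p) hpq.le
  have hdge : q - p ≤ d := by
    calc q - p = (Finset.Ico p q).card • 1 := by simp [Nat.card_Ico]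
    _ ≤ d := Finset.card_nsmul_le_sum _ _ _ (fun i hi => (hF _ (hwS i)).1)
  have hdle : d ≤ (q - p) * k := by
    calc d ≤ (Finset.Ico p q).card • k :=
          Finset.sum_le_card_nsmul _ _ _ (fun i hi => (hF _ (hwS i)).2.1)
    _ = (q - p) * k := by simp [Nat.card_Ico]
  have hndvd : n ∣ d := by
    have h1 : ((A p : ℕ) : ZMod n) = ((A q : ℕ) : ZMod n) := by
      have := (hwA p).symm.trans ((hweq.trans (hwA q)))
      exact add_left_cancel this
    have h2 : ((d : ℕ) : ZMod n) = 0 := by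
      have : ((A p + d : ℕ) : ZMod n) = ((A p : ℕ) : ZMod n) := by
        rw [hAd, h1]
      push_cast at this
      linear_combination this
    exact (ZMod.natCast_eq_zero_iff d n).mp h2
  have hd0 : 0 < d := lt_of_lt_of_le (Nat.sub_pos_of_lt hpq) hdge
  have hdn : d = n := by
    have h1 : n ≤ d := Nat.le_of_dvd hd0 hndvd
    have h2 : d ≤ n := le_trans hdle (by
      calc (q - p) * k ≤ m * k := Nat.mul_le_mul_right k (le_trans (Nat.sub_le q p) hqle)
      _ = n := hn)
    omega
  have hqp : p = 0 ∧ q = m := by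
    have : m * k ≤ (q - p) * k := by rw [hn, ← hdn]; exact hdle
    have hmqp : m ≤ q - p := Nat.le_of_mul_le_mul_right this hk
    omega
  obtain ⟨hp0, hqm⟩ := hqp
  subst hp0 hqm
  -- every step on the cycle is exactly k
  have hstep : ∀ s < m, F (w s) = k := by
    intro s hs
    by_contra hne
    have hlt : F (w s) < k := lt_of_le_of_ne (hF _ (hwS s)).2.1 hne
    have : d < m * k := by
      have : ∑ t ∈ Finset.Ico 0 m, F (w t) < ∑ t ∈ Finset.Ico 0 m, k :=
        Finset.sum_lt_sum (fun i _ => (hF _ (hwS i)).2.1)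
          ⟨s, Finset.mem_Ico.mpr ⟨Nat.zero_le s, hs⟩, hlt⟩
      simpa [hddef, Nat.card_Ico] using this
    rw [hdn, hn] at this
    exact lt_irrefl n this
  have hA : ∀ s, s ≤ m → A s = s * k := by
    intro s hsm
    simp only [hAdef]
    rw [Finset.sum_congr rfl (fun t ht => hstep t (lt_of_lt_of_le (Finset.mem_range.mp ht) hsm))]
    simp [mul_comm]
  have hwk : ∀ s, s ≤ m → w s = s0 + ((s * k : ℕ) : ZMod n) := by
    intro s hsm
    rw [hwA s, hA s hsm]
  -- the image set
  set T : Finset (ZMod n) :=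
    Finset.image (fun t : Fin m => s0 + ((t.val * k : ℕ) : ZMod n)) Finset.univ with hTdef
  have hmul_lt : ∀ t : ℕ, t < m → t * k < n := by
    intro t ht
    calc t * k < m * k := (Nat.mul_lt_mul_right hk).mpr ht
    _ = n := hn
  have hinj : Function.Injective (fun t : Fin m => s0 + ((t.val * k : ℕ) : ZMod n)) := by
    intro t1 t2 h
    simp only at h
    have h2 : ((t1.val * k : ℕ) : ZMod n) = ((t2.val * k : ℕ) : ZMod n) := add_left_cancel h
    have h3 : t1.val * k ≡ t2.val * k [MOD n] := (ZMod.natCast_eq_natCast_iff _ _ _).mp h2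
    have h4 : t1.val * k = t2.val * k := by
      have e1 := Nat.mod_eq_of_lt (hmul_lt _ t1.isLt)
      have e2 := Nat.mod_eq_of_lt (hmul_lt _ t2.isLt)
      unfold Nat.ModEq at h3
      omega
    exact Fin.ext (Nat.eq_of_mul_eq_mul_right hk h4)
  have hTsub : T ⊆ S := by
    intro x hx
    simp only [hTdef, Finset.mem_image, Finset.mem_univ, true_and] at hx
    obtain ⟨t, ht⟩ := hx
    rw [← ht, ← hwk t.val t.isLt.le]
    exact hwS t.val
  have hTcard : T.card = m := by
    rw [hTdef, Finset.card_image_of_injective _ hinj, Finset.card_univ, Fintype.card_fin]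
  have hST : S = T :=
    (Finset.eq_of_subset_of_card_le hTsub (by rw [hTcard, hScard])).symm
  constructor
  · intro x hx y hy j hj0 hjk hne
    rw [hST] at hx hy
    simp only [hTdef, Finset.mem_image, Finset.mem_univ, true_and] at hx hy
    obtain ⟨t1, ht1⟩ := hx
    obtain ⟨t2, ht2⟩ := hy
    rw [← ht1, ← ht2] at hne
    have h2 : ((t2.val * k : ℕ) : ZMod n) = ((t1.val * k + j : ℕ) : ZMod n) := by
      push_cast at hne ⊢
      linear_combination hne
    have h3 : t2.val * k ≡ t1.val * k + j [MOD n] := (ZMod.natCast_eq_natCast_iff _ _ _).mp h2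
    have h4 : t2.val * k ≡ t1.val * k + j [MOD k] := h3.of_dvd hdvd
    have h5 : j % k = 0 := by
      have := h4
      unfold Nat.ModEq at this
      rw [Nat.mul_mod_left, Nat.add_mod, Nat.mul_mod_left] at this
      simpa using this.symm
    rw [Nat.mod_eq_of_lt hjk] at h5
    omega
  · exact ⟨s0, hST⟩
end

section
/- Let n be divisible by k and m = n/k, and let D be the circulant digraph on Z/nZ with edges i → i+j for j ∈ {1,...,k}. Then the partition of the vertices into the k residue classes modulo k (V_i = {i, i+k, ..., i+(m-1)k}) is the unique partition into k parts for which every vertex has out-degree at least 1 within its own part. -/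
/-- Walk lemma: from any vertex `v`, following same-color jumps of size `≤ k`,
we hit every window `{b, b+1, …, b+k-1}` of offsets. -/
lemma walk_hits {n k : ℕ} [NeZero n] (P : ZMod n → Fin k)
    (hdeg : ∀ v : ZMod n, ∃ j : ℕ, 1 ≤ j ∧ j ≤ k ∧ P (v + (j : ZMod n)) = P v)
    (v : ZMod n) (b : ℕ) :
    ∃ j : ℕ, j < k ∧ P (v + ((b + j : ℕ) : ZMod n)) = P v := by
  choose f hf1 hf2 hf3 using hdeg
  have hk : 0 < k := lt_of_lt_of_le (hf1 v) (hf2 v)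
  set s : ℕ → ℕ := fun t => Nat.rec 0 (fun _ ih => ih + f (v + (ih : ZMod n))) t with hs
  have hstep : ∀ t, s (t + 1) = s t + f (v + (s t : ZMod n)) := fun t => rfl
  have hP : ∀ t, P (v + (s t : ZMod n)) = P v := by
    intro t
    induction t with
    | zero => simp [hs]
    | succ t ih =>
      rw [hstep]
      push_cast
      rw [← add_assoc, hf3 (v + (s t : ZMod n))]
      exact ih
  have key : ∀ b : ℕ, ∃ t, b ≤ s t ∧ s t < b + k := by
    intro b
    induction b with
    | zero => exact ⟨0, le_refl _, by simpa [hs] using hk⟩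
    | succ b ih =>
      obtain ⟨t, h1, h2⟩ := ih
      rcases eq_or_lt_of_le h1 with he | hl
      · have g1 := hf1 (v + (s t : ZMod n))
        have g2 := hf2 (v + (s t : ZMod n))
        refine ⟨t + 1, ?_, ?_⟩
        · rw [hstep]; omega
        · rw [hstep]; omega
      · exact ⟨t, by omega, by omega⟩
  obtain ⟨t, h1, h2⟩ := key b
  refine ⟨s t - b, by omega, ?_⟩
  have : b + (s t - b) = s t := by omega
  rw [this]
  exact hP t

/-- In the circulant digraph on `ZMod n` with edges `i → i + j` for `j ∈ {1,…,k}`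
(`k ∣ n`), the partition into the `k` residue classes modulo `k` is a `k`-partition in
which every vertex has an out-neighbor in its own part, and it is the unique such
partition: any surjective assignment `P : ZMod n → Fin k` of vertices to `k` (nonempty)
parts in which every vertex has out-degree at least 1 within its part induces exactly
the residue classes modulo `k`. -/
theorem stmt_3 (n k : ℕ) [NeZero n] (hk : 0 < k) (hkn : k < n) (hdvd : k ∣ n) :
    (Function.Surjective
        (fun v : ZMod n => (⟨v.val % k, Nat.mod_lt _ hk⟩ : Fin k)) ∧
      ∀ v : ZMod n, ∃ j : ℕ, 1 ≤ j ∧ j ≤ k ∧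
        (v + (j : ZMod n)).val % k = v.val % k) ∧
    (∀ P : ZMod n → Fin k, Function.Surjective P →
      (∀ v : ZMod n, ∃ j : ℕ, 1 ≤ j ∧ j ≤ k ∧ P (v + (j : ZMod n)) = P v) →
      ∀ u v : ZMod n, P u = P v ↔ u.val % k = v.val % k) := by
  have hval : ∀ a : ZMod n, ((a.val : ZMod n)) = a := by
    intro a; simp [ZMod.natCast_val, ZMod.cast_id]
  constructor
  · constructor
    · -- surjectivity of residue map
      intro c
      refine ⟨(c.val : ZMod n), ?_⟩
      have hc : (c.val : ZMod n).val = c.val :=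
        ZMod.val_cast_of_lt (lt_trans c.isLt hkn)
      ext
      simp [hc, Nat.mod_eq_of_lt c.isLt]
    · -- j = k works
      intro v
      refine ⟨k, hk, le_refl _, ?_⟩
      have hkval : ((k : ZMod n)).val = k := ZMod.val_cast_of_lt hkn
      rw [ZMod.val_add, hkval, Nat.mod_mod_of_dvd _ hdvd, Nat.add_mod_right]
  · intro P hsurj hdeg u v
    -- Step A: every window of length k contains every color
    have hA : ∀ (a : ZMod n) (c : Fin k), ∃ j : ℕ, j < k ∧ P (a + (j : ZMod n)) = c := by
      intro a c
      obtain ⟨w, hw⟩ := hsurj c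
      obtain ⟨j, hj, hPj⟩ := walk_hits P hdeg w (a - w).val
      refine ⟨j, hj, ?_⟩
      rw [← hw, ← hPj]
      congr 1
      push_cast
      rw [hval]
      ring
    -- Step B: P is injective on windows
    have hB : ∀ (a : ZMod n) (i₁ i₂ : Fin k),
        P (a + (i₁.val : ZMod n)) = P (a + (i₂.val : ZMod n)) → i₁ = i₂ := by
      intro a
      have hsurj' : Function.Surjective (fun i : Fin k => P (a + (i.val : ZMod n))) := by
        intro c
        obtain ⟨j, hj, hPj⟩ := hA a c
        exact ⟨⟨j, hj⟩, hPj⟩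
      exact Finite.injective_iff_surjective.mpr hsurj'
    -- Step C: P (v + k) = P v
    have hC : ∀ w : ZMod n, P (w + (k : ZMod n)) = P w := by
      intro w
      obtain ⟨j, hj, hPj⟩ := hA (w + 1) (P w)
      rcases Nat.lt_or_ge j (k - 1) with hlt | hge
      · exfalso
        have h0 : P (w + ((0 : ℕ) : ZMod n)) = P (w + ((1 + j : ℕ) : ZMod n)) := by
          have e1 : w + ((0 : ℕ) : ZMod n) = w := by push_cast; ring
          have e2 : w + ((1 + j : ℕ) : ZMod n) = w + 1 + (j : ZMod n) := by push_cast; ring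
          rw [e1, e2, hPj]
        have := hB w ⟨0, hk⟩ ⟨1 + j, by omega⟩ h0
        simp [Fin.ext_iff] at this
        omega
      · have hje : j = k - 1 := by omega
        rw [← hPj, hje]
        congr 1
        have : (1 : ZMod n) + ((k - 1 : ℕ) : ZMod n) = (k : ZMod n) := by
          have : ((1 + (k - 1) : ℕ) : ZMod n) = (k : ZMod n) := by
            congr 1; omega
          push_cast at this
          exact this
        rw [add_assoc, this]
    -- Step D: P (w + t*k) = P w
    have hD : ∀ (w : ZMod n) (t : ℕ), P (w + ((t * k : ℕ) : ZMod n)) = P w := by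
      intro w t
      induction t with
      | zero => simp
      | succ t ih =>
        have : ((( t + 1) * k : ℕ) : ZMod n) = ((t * k : ℕ) : ZMod n) + (k : ZMod n) := by
          push_cast; ring
        rw [this, ← add_assoc, hC, ih]
    -- P w = P (w.val % k)
    have hE : ∀ w : ZMod n, P w = P ((w.val % k : ℕ) : ZMod n) := by
      intro w
      have hw : w = ((w.val % k : ℕ) : ZMod n) + ((w.val / k * k : ℕ) : ZMod n) := by
        conv_lhs => rw [← hval w]
        rw [← Nat.cast_add]
        congr 1
        exact (Nat.mod_add_div' w.val k).symm
      conv_lhs => rw [hw]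
      rw [hD]
    constructor
    · intro h
      have h' : P (((0 : ZMod n)) + ((u.val % k : ℕ) : ZMod n))
          = P (((0 : ZMod n)) + ((v.val % k : ℕ) : ZMod n)) := by
        simpa using (hE u ▸ hE v ▸ h)
      have := hB 0 ⟨u.val % k, Nat.mod_lt _ hk⟩ ⟨v.val % k, Nat.mod_lt _ hk⟩ h'
      simpa [Fin.ext_iff] using this
    · intro h
      rw [hE u, hE v, h]
end

section
/- Let G be an undirected graph with minimum degree at least k+1 that contains k pairwise vertex-disjoint cycles. Then G admits a partition of its vertex set into k parts such that every vertex has at least 2 neighbors within its own part. -/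
/-!
Fix a partition that puts the `i`-th cycle into the `i`-th part and, among all such partitions,
maximises the number of edges inside parts. A vertex on a cycle has its two cycle neighbours in
its own part. A vertex `v` off the cycles may be moved freely; moving it to part `j` changes the
number of inner edges by its number of neighbours in part `j` minus its number of neighbours in
its own part. Since `v` has more than `k` neighbours, some part contains two of them, so by
maximality `v` already has at least two neighbours in its own part.
-/

open Finset Function

namespace SimpleGraph

variable {V ι : Type*} (G : SimpleGraph V)

def withinParts (P : V → ι) : SimpleGraph V where
  Adj x y := G.Adj x y ∧ P x = P y
  symm := ⟨fun _ _ h => ⟨h.1.symm, h.2.symm⟩⟩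

variable {G}

@[simp]
lemma withinParts_adj {P : V → ι} {x y : V} :
    (G.withinParts P).Adj x y ↔ G.Adj x y ∧ P x = P y :=
  Iff.rfl

instance [DecidableRel G.Adj] [DecidableEq ι] {P : V → ι} :
    DecidableRel (G.withinParts P).Adj :=
  fun _ _ => inferInstanceAs (Decidable (_ ∧ _))

lemma deleteIncidenceSet_withinParts_update [DecidableEq V] (P : V → ι) (v : V) (j : ι) :
    (G.withinParts (update P v j)).deleteIncidenceSet v =
      (G.withinParts P).deleteIncidenceSet v := by
  ext x y
  simp only [deleteIncidenceSet_adj, withinParts_adj]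
  constructor <;> rintro ⟨⟨hxy, hP⟩, hx, hy⟩ <;> simp_all [update_of_ne]

variable [Fintype V] [DecidableRel G.Adj] [DecidableEq ι]

lemma neighborFinset_withinParts (P : V → ι) (v : V) :
    (G.withinParts P).neighborFinset v = {u ∈ G.neighborFinset v | P u = P v} := by
  ext u
  simp [eq_comm]

lemma neighborFinset_withinParts_update [DecidableEq V] (P : V → ι) (v : V) (j : ι) :
    (G.withinParts (update P v j)).neighborFinset v = {u ∈ G.neighborFinset v | P u = j} := by
  rw [neighborFinset_withinParts, update_self]
  refine filter_congr fun u hu => ?_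
  rw [update_of_ne (G.ne_of_adj ((G.mem_neighborFinset v u).mp hu)).symm]

lemma card_edgeFinset_withinParts_update_add [DecidableEq V] (P : V → ι) (v : V) (j : ι) :
    #(G.withinParts (update P v j)).edgeFinset + (G.withinParts P).degree v =
      #(G.withinParts P).edgeFinset + (G.withinParts (update P v j)).degree v := by
  have hrest : #((G.withinParts (update P v j)).deleteIncidenceSet v).edgeFinset =
      #((G.withinParts P).deleteIncidenceSet v).edgeFinset := by
    rw [edgeFinset_inj.mpr (deleteIncidenceSet_withinParts_update P v j)]
  rw [card_edgeFinset_deleteIncidenceSet, card_edgeFinset_deleteIncidenceSet] at hrest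
  have h₁ := (G.withinParts P).degree_le_card_edgeFinset v
  have h₂ := (G.withinParts (update P v j)).degree_le_card_edgeFinset v
  omega

lemma two_le_degree_withinParts_of_forall_update_le [DecidableEq V] [Fintype ι] (P : V → ι)
    (v : V) (hdeg : Fintype.card ι < G.degree v)
    (hmax : ∀ j, #(G.withinParts (update P v j)).edgeFinset ≤ #(G.withinParts P).edgeFinset) :
    2 ≤ (G.withinParts P).degree v := by
  obtain ⟨j, -, hj⟩ : ∃ j ∈ univ, 1 < #{u ∈ G.neighborFinset v | P u = j} :=
    exists_lt_card_fiber_of_mul_lt_card_of_maps_to (fun _ _ => mem_univ _) (by simpa using hdeg)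
  rw [← neighborFinset_withinParts_update (G := G), card_neighborFinset_eq_degree] at hj
  have := card_edgeFinset_withinParts_update_add (G := G) P v j
  have := hmax j
  omega

lemma Walk.IsCycle.two_le_degree_withinParts {P : V → ι} {i : ι} {u v : V} {c : G.Walk u u}
    (hc : c.IsCycle) (hP : ∀ x ∈ c.support, P x = i) (hv : v ∈ c.support) :
    2 ≤ (G.withinParts P).degree v := by
  have hsub : c.toSubgraph.neighborSet v ⊆ (G.withinParts P).neighborSet v := fun y hy => by
    have hy' : y ∈ c.support := by simpa using c.toSubgraph.edge_vert hy.symm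
    exact ⟨c.toSubgraph.adj_sub hy, by rw [hP v hv, hP y hy']⟩
  calc 2 = (c.toSubgraph.neighborSet v).ncard := (hc.ncard_neighborSet_toSubgraph_eq_two hv).symm
    _ ≤ ((G.withinParts P).neighborSet v).ncard := Set.ncard_le_ncard hsub
    _ = (G.withinParts P).degree v := by
      rw [Set.ncard_eq_toFinset_card', ← card_neighborSet_eq_degree, Set.toFinset_card]

end SimpleGraph

lemma exists_forall_mem_eq_of_pairwise_disjoint {α ι : Type*} [Nonempty ι] (s : ι → Set α)
    (hs : Pairwise (Disjoint on s)) : ∃ P : α → ι, ∀ i, ∀ x ∈ s i, P x = i := by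
  classical
  refine ⟨fun x => if h : ∃ i, x ∈ s i then h.choose else Classical.arbitrary ι, ?_⟩
  intro i x hx
  have h : ∃ i, x ∈ s i := ⟨i, hx⟩
  simp only [dif_pos h]
  by_contra hne
  exact Set.disjoint_left.mp (hs hne) h.choose_spec hx

open SimpleGraph in
/-- Let `G` be an undirected graph with minimum degree at least `k+1` that contains `k`
pairwise vertex-disjoint cycles. Then `G` admits a partition of its vertex set into `k`
(nonempty) parts such that every vertex has at least 2 neighbors within its own part. -/
theorem stmt_6 {V : Type} [Fintype V] [DecidableEq V]
    (G : SimpleGraph V) [DecidableRel G.Adj] (k : ℕ) (hk : 0 < k)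
    (hdeg : ∀ v : V, k + 1 ≤ G.degree v)
    (hcyc : ∃ (u : Fin k → V) (w : (i : Fin k) → G.Walk (u i) (u i)),
      (∀ i, (w i).IsCycle) ∧
      ∀ i j, i ≠ j → ∀ x ∈ (w i).support, x ∉ (w j).support) :
    ∃ P : V → Fin k, Function.Surjective P ∧
      ∀ v : V, 2 ≤ ((G.neighborFinset v).filter (fun u => P u = P v)).card := by
  obtain ⟨u, w, hcycle, hdisj⟩ := hcyc
  have : Nonempty (Fin k) := ⟨⟨0, hk⟩⟩
  set S : Finset (V → Fin k) := {P | ∀ i, ∀ x ∈ (w i).support, P x = i} with hS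
  obtain ⟨P₀, hP₀⟩ := exists_forall_mem_eq_of_pairwise_disjoint (fun i => {x | x ∈ (w i).support})
    fun i j hij => Set.disjoint_left.mpr (hdisj i j hij)
  obtain ⟨P, hPS, hPmax⟩ :=
    S.exists_max_image (fun P => #(G.withinParts P).edgeFinset) ⟨P₀, by simpa [hS] using hP₀⟩
  simp only [hS, mem_filter, mem_univ, true_and] at hPS
  refine ⟨P, fun i => ⟨u i, hPS i _ (w i).start_mem_support⟩, fun v => ?_⟩
  rw [← neighborFinset_withinParts, card_neighborFinset_eq_degree]
  by_cases hv : ∃ i, v ∈ (w i).support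
  · obtain ⟨i, hv⟩ := hv
    exact (hcycle i).two_le_degree_withinParts (hPS i) hv
  · push Not at hv
    refine two_le_degree_withinParts_of_forall_update_le P v (by simpa using hdeg v)
      fun j => hPmax _ ?_
    simp only [hS, mem_filter, mem_univ, true_and]
    intro i x hx
    rw [update_of_ne (by rintro rfl; exact hv i hx), hPS i x hx]
end

section
/- For every ε > 0 and every k ≥ 2, there exist arbitrarily large digraphs D on n vertices (n divisible by k, n > some threshold depending on ε and k) such that the unique k-partition with minimum out-degree at least 1 within parts has total internal degree exactly n, while some other k-partition into parts of size n/k has total internal degree at least nk − k^3; in particular the ratio of the maximum utilitarian welfare to the utilitarian welfare of the maximum-egalitarian partition is unbounded as n → ∞. -/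
/-!
Call a partition `P` of `Circ(n; {1,…,k})` *returning within `k`* if every vertex has an
out-neighbour in its own part. Go back from a vertex `v` to the nearest vertex `w` of a given
part; the internal out-neighbour of `w` lies at most `k` steps ahead, and it cannot lie at or
before `v`, so every window of `k` consecutive vertices meets every part. With exactly `k`
nonempty parts, each window meets each part exactly once, so the first return to one's own
part happens after exactly `k` steps. The parts are therefore the residue classes mod `k`,
each a directed cycle, and every vertex has internal out-degree exactly `1`.

In contrast, cutting the cycle into `k` blocks of `m = n / k` consecutive vertices keeps all
`k` out-edges of a vertex inside its block unless the vertex is among the last `k` of the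
block, so the total internal degree is at least `k · k · (m - k) = nk - k³`.
-/

section

open Finset Fin.CommRing

variable {n : ℕ} [NeZero n] {α : Type*} {k m : ℕ}

theorem Fin.val_add_natCast (v : Fin n) (j : ℕ) :
    (v + (j : Fin n)).val = (v.val + j) % n := by
  simp [Fin.val_add]

theorem Fin.mk_add_mod (v : Fin n) (j : ℕ) :
    (⟨(v.val + j) % n, Nat.mod_lt _ v.pos⟩ : Fin n) = v + (j : Fin n) :=
  Fin.ext (Fin.val_add_natCast v j).symm

theorem Fin.divNat_finProdFinEquiv (x : Fin k × Fin m) : (finProdFinEquiv x).divNat = x.1 :=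
  congrArg Prod.fst (finProdFinEquiv.symm_apply_apply x)

theorem Fin.sum_univ_mul {M : Type*} [AddCommMonoid M] (f : Fin (k * m) → M) :
    ∑ v, f v = ∑ c : Fin k, ∑ r : Fin m, f (finProdFinEquiv (c, r)) := by
  rw [← Fintype.sum_prod_type', finProdFinEquiv.sum_comp]

namespace Circulant

def totalInternalDegree [DecidableEq α] (P : Fin n → α) (k : ℕ) : ℕ :=
  ∑ v, #{j ∈ Icc 1 k | P (v + ((j : ℕ) : Fin n)) = P v}

def ReturnsWithin (P : Fin n → α) (k : ℕ) : Prop :=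
  ∀ v, ∃ j ∈ Icc 1 k, P (v + (j : Fin n)) = P v

theorem ReturnsWithin.exists_apply_add_eq {P : Fin n → α} (hP : ReturnsWithin P k)
    (v u : Fin n) : ∃ j ∈ Icc 1 k, P (v + (j : Fin n)) = P u := by
  classical
  have hex : ∃ t : ℕ, P (v - (t : Fin n)) = P u := ⟨(v - u).val, by simp⟩
  set t := Nat.find hex
  obtain ⟨j, hj, hPj⟩ := hP (v - t)
  rw [mem_Icc] at hj
  have htj : t < j := by
    by_contra! hjt
    refine Nat.find_min hex (m := t - j) (by omega) ?_
    rw [Nat.cast_sub hjt, sub_sub_eq_add_sub, add_sub_right_comm, hPj]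
    exact Nat.find_spec hex
  refine ⟨j - t, mem_Icc.2 ⟨by omega, by omega⟩, ?_⟩
  rw [Nat.cast_sub htj.le, ← add_sub_assoc, add_sub_right_comm, hPj]
  exact Nat.find_spec hex

theorem ReturnsWithin.apply_add_eq_iff {P : Fin n → Fin k} (hP : ReturnsWithin P k)
    (hsurj : Function.Surjective P) (v : Fin n) {j : ℕ} (hj : j ∈ Icc 1 k) :
    P (v + (j : Fin n)) = P v ↔ j = k := by
  rw [mem_Icc] at hj
  set window : Fin k → Fin k := fun s => P (v - 1 + ((s.val + 1 : ℕ) : Fin n))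
  have hwindow : window.Injective := by
    refine Finite.injective_iff_surjective.2 fun c => ?_
    obtain ⟨u, rfl⟩ := hsurj c
    obtain ⟨i, hi, hPi⟩ := hP.exists_apply_add_eq (v - 1) u
    rw [mem_Icc] at hi
    exact ⟨⟨i - 1, by omega⟩, by simp only [window, Nat.sub_add_cancel hi.1, hPi]⟩
  have hne : ∀ i, 1 ≤ i → i < k → P (v + (i : Fin n)) ≠ P v := fun i hi hik h => by
    have := @hwindow ⟨i, hik⟩ ⟨0, by omega⟩ (by simpa [window] using h)
    simp only [Fin.mk.injEq] at this
    omega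
  constructor
  · intro h
    by_contra hjk
    exact hne j hj.1 (by omega) h
  · rintro rfl
    obtain ⟨i, hi, hPi⟩ := hP v
    rw [mem_Icc] at hi
    obtain rfl : i = j := by
      by_contra hij
      exact hne i hi.1 (by omega) hPi
    exact hPi

def IsResiduePartition (P : Fin n → α) (k : ℕ) : Prop :=
  ∀ v (d : ℕ), P (v + (d : Fin n)) = P v ↔ k ∣ d

theorem isResiduePartition_val_mod (hkn : k ∣ n) :
    IsResiduePartition (fun v : Fin n => v.val % k) k := fun v d => by
  simp only [Fin.val_add_natCast, Nat.mod_mod_of_dvd _ hkn]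
  exact Nat.add_modEq_left_iff

theorem isResiduePartition_of_forall_mem_Icc {P : Fin n → α} (hk : 0 < k)
    (hP : ∀ v, ∀ j ∈ Icc 1 k, P (v + (j : Fin n)) = P v ↔ j = k) :
    IsResiduePartition P k := by
  have hperiod : ∀ w q, P (w + ((k * q : ℕ) : Fin n)) = P w := fun w q => by
    induction q with
    | zero => simp
    | succ q ih =>
      rw [Nat.mul_succ, Nat.cast_add, ← add_assoc, (hP _ k (mem_Icc.2 ⟨hk, le_rfl⟩)).2 rfl, ih]
  intro v d
  have hmod : P (v + (d : Fin n)) = P (v + ((d % k : ℕ) : Fin n)) := by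
    conv_lhs => rw [← Nat.mod_add_div d k, Nat.cast_add, ← add_assoc]
    exact hperiod _ _
  rw [hmod, Nat.dvd_iff_mod_eq_zero]
  rcases (d % k).eq_zero_or_pos with h | h
  · simp [h]
  · rw [hP v _ (mem_Icc.2 ⟨h, (Nat.mod_lt _ hk).le⟩)]
    have := Nat.mod_lt d hk
    omega

theorem ReturnsWithin.isResiduePartition {P : Fin n → Fin k} (hP : ReturnsWithin P k)
    (hsurj : Function.Surjective P) : IsResiduePartition P k :=
  isResiduePartition_of_forall_mem_Icc (P 0).pos fun v _ hj => hP.apply_add_eq_iff hsurj v hj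

namespace IsResiduePartition

variable {P : Fin n → α}

theorem apply_add_eq_iff_of_mem_Icc (hP : IsResiduePartition P k) (v : Fin n) {j : ℕ}
    (hj : j ∈ Icc 1 k) : P (v + (j : Fin n)) = P v ↔ j = k := by
  rw [mem_Icc] at hj
  rw [hP]
  exact ⟨fun h => le_antisymm hj.2 (Nat.le_of_dvd hj.1 h), fun h => h ▸ dvd_rfl⟩

theorem apply_eq_iff_dvd_sub (hP : IsResiduePartition P k) (u v : Fin n) :
    P u = P v ↔ k ∣ (u - v).val := by
  rw [← hP v, Fin.cast_val_eq_self, add_sub_cancel]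

theorem apply_eq_iff_val_mod_eq (hP : IsResiduePartition P k) (hkn : k ∣ n) (u v : Fin n) :
    P u = P v ↔ u.val % k = v.val % k := by
  rw [hP.apply_eq_iff_dvd_sub, (isResiduePartition_val_mod hkn).apply_eq_iff_dvd_sub]

theorem returnsWithin (hP : IsResiduePartition P k) (hk : 0 < k) : ReturnsWithin P k :=
  fun v => ⟨k, mem_Icc.2 ⟨hk, le_rfl⟩, (hP v k).2 dvd_rfl⟩

theorem totalInternalDegree_eq [DecidableEq α] (hP : IsResiduePartition P k) (hk : 0 < k) :
    totalInternalDegree P k = n := by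
  have hfilter : ∀ v : Fin n, {j ∈ Icc 1 k | P (v + ((j : ℕ) : Fin n)) = P v} = {k} := fun v => by
    ext j
    simp only [mem_filter, mem_singleton]
    constructor
    · exact fun ⟨hj, h⟩ => (hP.apply_add_eq_iff_of_mem_Icc v hj).1 h
    · rintro rfl
      exact ⟨mem_Icc.2 ⟨hk, le_rfl⟩, (hP v j).2 dvd_rfl⟩
  simp [totalInternalDegree, hfilter]

end IsResiduePartition

theorem card_filter_divNat_eq (c : Fin k) : #{v : Fin (k * m) | v.divNat = c} = m := by
  rw [card_filter, Fin.sum_univ_mul]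
  simp [Fin.divNat_finProdFinEquiv]

theorem divNat_finProdFinEquiv_add_natCast [NeZero (k * m)] (c : Fin k) (r : Fin m) {j : ℕ}
    (h : r.val + j < m) : (finProdFinEquiv (c, r) + (j : Fin (k * m))).divNat = c := by
  have hlt : r.val + j + m * c.val < k * m := by nlinarith [c.isLt]
  ext
  simp only [Fin.coe_divNat, Fin.val_add_natCast, finProdFinEquiv_apply_val]
  rw [add_right_comm, Nat.mod_eq_of_lt hlt, Nat.add_mul_div_left _ _ (by omega),
    Nat.div_eq_of_lt h, zero_add]

theorem sub_le_totalInternalDegree_divNat [NeZero (k * m)] :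
    k * m * k - k ^ 3 ≤ totalInternalDegree (Fin.divNat : Fin (k * m) → Fin k) k := by
  have hfull : ∀ c r, r.val + k < m →
      #{j ∈ Icc 1 k | (finProdFinEquiv (c, r) + ((j : ℕ) : Fin (k * m))).divNat =
        (finProdFinEquiv (c, r)).divNat} = k := fun c r h => by
    rw [filter_true_of_mem, Nat.card_Icc, Nat.add_sub_cancel]
    intro j hj
    rw [mem_Icc] at hj
    rw [divNat_finProdFinEquiv_add_natCast c r (by omega), Fin.divNat_finProdFinEquiv]
  have hcount : ∑ r : Fin m, (if r.val + k < m then k else 0) = (m - k) * k := by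
    have hgood : {r ∈ range m | r + k < m} = range (m - k) := by
      ext r
      simp only [mem_filter, mem_range]
      omega
    rw [Fin.sum_univ_eq_sum_range (fun r => if r + k < m then k else 0), ← sum_filter, hgood,
      sum_const, card_range, smul_eq_mul]
  calc k * m * k - k ^ 3 = ∑ c : Fin k, ∑ r : Fin m, if r.val + k < m then k else 0 := by
        simp only [hcount, sum_const, card_univ, Fintype.card_fin, smul_eq_mul]
        rw [Nat.sub_mul, Nat.mul_sub]
        ring_nf
    _ ≤ ∑ c : Fin k, ∑ r : Fin m, #{j ∈ Icc 1 k |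
          (finProdFinEquiv (c, r) + ((j : ℕ) : Fin (k * m))).divNat =
            (finProdFinEquiv (c, r)).divNat} := by
        gcongr with c _ r _
        split_ifs with h
        · rw [hfull c r h]
        · exact Nat.zero_le _
    _ = totalInternalDegree (Fin.divNat : Fin (k * m) → Fin k) k := by
        rw [totalInternalDegree, Fin.sum_univ_mul]

end Circulant

end

theorem stmt_8_general (k : ℕ) (hk : 2 ≤ k) (ε : ℝ) (N : ℕ) :
    ∃ n : ℕ, N ≤ n ∧ 0 < n ∧ k ∣ n ∧
      -- the residue-classes-mod-k partition has every vertex with an internal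
      -- out-neighbor, and total internal degree exactly n
      ((∀ v : Fin n, ∃ j ∈ Finset.Icc 1 k,
          ((v.val + j) % n) % k = v.val % k) ∧
        (∑ v : Fin n, ((Finset.Icc 1 k).filter
            (fun j => ((v.val + j) % n) % k = v.val % k)).card) = n) ∧
      -- uniqueness: any surjective k-partition with minimum internal out-degree ≥ 1
      -- is the residue partition, and its total internal degree is exactly n
      (∀ P : Fin n → Fin k, Function.Surjective P →
        (∀ v : Fin n, ∃ j ∈ Finset.Icc 1 k,
            P ⟨(v.val + j) % n, Nat.mod_lt _ v.pos⟩ = P v) →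
        ((∀ u v : Fin n, P u = P v ↔ u.val % k = v.val % k) ∧
          (∑ v : Fin n, ((Finset.Icc 1 k).filter
              (fun j => P ⟨(v.val + j) % n, Nat.mod_lt _ v.pos⟩ = P v)).card)
            = n)) ∧
      -- some k-partition into parts of size n/k has total internal degree ≥ n*k - k^3
      (∃ Q : Fin n → Fin k,
        (∀ c : Fin k, (Finset.univ.filter (fun v => Q v = c)).card = n / k) ∧
        n * k - k ^ 3 ≤ ∑ v : Fin n, ((Finset.Icc 1 k).filter
            (fun j => Q ⟨(v.val + j) % n, Nat.mod_lt _ v.pos⟩ = Q v)).card) ∧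
      -- hence the utilitarian welfare of the egalitarian-optimal partition cannot be
      -- within a factor k*(1+ε) of the maximum utilitarian welfare
      (k : ℝ) * (1 + ε) ≤ (n : ℝ) * k - (k : ℝ) ^ 3 := by
  set m := max N (k + ⌈ε⌉₊ + 1)
  have hk0 : 0 < k := by omega
  have hmk : k + ⌈ε⌉₊ + 1 ≤ m := le_max_right _ _
  have hn : 0 < k * m := Nat.mul_pos hk0 (by omega)
  have : NeZero (k * m) := ⟨hn.ne'⟩
  have hkn : k ∣ k * m := dvd_mul_right k m
  have hres := Circulant.isResiduePartition_val_mod hkn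
  refine ⟨k * m, (le_max_left _ _).trans (Nat.le_mul_of_pos_left m hk0), hn, hkn,
    ⟨?_, ?_⟩, fun P hsurj hP => ?_, ⟨Fin.divNat, fun c => ?_, ?_⟩, ?_⟩
  · simp only [← Fin.val_add_natCast]
    exact hres.returnsWithin hk0
  · simp only [← Fin.val_add_natCast]
    exact hres.totalInternalDegree_eq hk0
  · simp only [Fin.mk_add_mod] at hP ⊢
    have hPres := Circulant.ReturnsWithin.isResiduePartition hP hsurj
    exact ⟨hPres.apply_eq_iff_val_mod_eq hkn, hPres.totalInternalDegree_eq hk0⟩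
  · rw [Nat.mul_div_cancel_left _ hk0]
    exact Circulant.card_filter_divNat_eq c
  · simp only [Fin.mk_add_mod]
    exact Circulant.sub_le_totalInternalDegree_divNat
  · have hmk' : (k : ℝ) + ⌈ε⌉₊ + 1 ≤ m := by exact_mod_cast hmk
    have hceil : (0 : ℝ) ≤ ⌈ε⌉₊ := Nat.cast_nonneg _
    have hk1 : (1 : ℝ) ≤ k := by exact_mod_cast hk0
    calc (k : ℝ) * (1 + ε) ≤ k * (m - k) := by gcongr; linarith [Nat.le_ceil ε]
      _ ≤ k * (m - k) * k := le_mul_of_one_le_right (mul_nonneg (by positivity) (by linarith)) hk1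
      _ = ((k * m : ℕ) : ℝ) * k - (k : ℝ) ^ 3 := by push_cast; ring

/-- For every `ε > 0` and every `k ≥ 2` there exist arbitrarily large circulant digraphs
`Circ(n; {1,…,k})` on `n` vertices (`k ∣ n`) such that: every surjective `k`-partition in
which each vertex has out-degree at least 1 within its own part is exactly the partition
into residue classes mod `k` and has total internal degree exactly `n` (and the residue
partition indeed has this property); some other `k`-partition into parts of size `n/k`
has total internal degree at least `n*k - k^3`; and `n*k - k^3 ≥ k*(1+ε)`, so the ratio
of the maximum utilitarian welfare to the utilitarian welfare of the maximum-egalitarian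
partition is unbounded. -/
theorem stmt_8 (k : ℕ) (hk : 2 ≤ k) (ε : ℝ) (hε : 0 < ε) (N : ℕ) :
    ∃ n : ℕ, N ≤ n ∧ 0 < n ∧ k ∣ n ∧
      -- the residue-classes-mod-k partition has every vertex with an internal
      -- out-neighbor, and total internal degree exactly n
      ((∀ v : Fin n, ∃ j ∈ Finset.Icc 1 k,
          ((v.val + j) % n) % k = v.val % k) ∧
        (∑ v : Fin n, ((Finset.Icc 1 k).filter
            (fun j => ((v.val + j) % n) % k = v.val % k)).card) = n) ∧
      -- uniqueness: any surjective k-partition with minimum internal out-degree ≥ 1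
      -- is the residue partition, and its total internal degree is exactly n
      (∀ P : Fin n → Fin k, Function.Surjective P →
        (∀ v : Fin n, ∃ j ∈ Finset.Icc 1 k,
            P ⟨(v.val + j) % n, Nat.mod_lt _ v.pos⟩ = P v) →
        ((∀ u v : Fin n, P u = P v ↔ u.val % k = v.val % k) ∧
          (∑ v : Fin n, ((Finset.Icc 1 k).filter
              (fun j => P ⟨(v.val + j) % n, Nat.mod_lt _ v.pos⟩ = P v)).card)
            = n)) ∧
      -- some k-partition into parts of size n/k has total internal degree ≥ n*k - k^3
      (∃ Q : Fin n → Fin k,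
        (∀ c : Fin k, (Finset.univ.filter (fun v => Q v = c)).card = n / k) ∧
        n * k - k ^ 3 ≤ ∑ v : Fin n, ((Finset.Icc 1 k).filter
            (fun j => Q ⟨(v.val + j) % n, Nat.mod_lt _ v.pos⟩ = Q v)).card) ∧
      -- hence the utilitarian welfare of the egalitarian-optimal partition cannot be
      -- within a factor k*(1+ε) of the maximum utilitarian welfare
      (k : ℝ) * (1 + ε) ≤ (n : ℝ) * k - (k : ℝ) ^ 3 :=
  stmt_8_general k hk ε N
end
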